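/- Let n ≥ 1 and s ∈ (0,1). Set ⟨x⟩ = (1 + (|x| - 1)^4)^{1/4} for x ∈ ℝⁿ, and define φ : ℝⁿ → ℝ by φ(x) = 1 if |x| ≤ 1 and φ(x) = ⟨x⟩^{-n-2s} if |x| ≥ 1. Then there exists a constant C > 0 (depending only on n and s) such that for every x ∈ ℝⁿ with |x| ≥ 2, ∫_{|y| ≤ |x|/2} |φ(x+y) + φ(x-y) - 2φ(x)| / |y|^{n+2s} dy ≤ C ⟨x⟩^{-n-4s}. -/

import Mathlib

open MeasureTheory Real Set

/-- The Japanese-bracket-type weight `⟨x⟩ = (1 + (|x| - 1)^4)^{1/4}`. -/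
noncomputable def jbr {n : ℕ} (x : EuclideanSpace ℝ (Fin n)) : ℝ :=
  (1 + (‖x‖ - 1) ^ 4) ^ ((1 : ℝ) / 4)

/-- The test function `φ(x) = 1` if `|x| ≤ 1`, `φ(x) = ⟨x⟩^{-n-2s}` if `|x| ≥ 1`. -/
noncomputable def phi (n : ℕ) (s : ℝ) (x : EuclideanSpace ℝ (Fin n)) : ℝ :=
  if ‖x‖ ≤ 1 then 1 else jbr x ^ (-((n : ℝ) + 2 * s))

/-!
On `|z| ≥ 1`, `φ(z) = g(|z|)` with `g(r) = (1 + (r - 1)^4)^(-q/4)` and `q = n + 2s`. For `|x| ≥ 2`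
and `|y| ≤ |x|/2` the segment `x + t y`, `|t| ≤ 1`, stays in `|z| ≥ |x|/2 ≥ 1`, where the second
derivative of `t ↦ g(|x + t y|)` is at most `(|g''(r)| + |g'(r)| / r) |y|^2 = O(⟨x⟩^(-q-2) |y|^2)`,
because `⟨r⟩^4 ≥ ⟨x⟩^4 / 256` for `r ≥ |x|/2`. So the integrand is `O(⟨x⟩^(-q-2) |y|^(2-q))`.
By scaling, the integral of `|y|^(2-q)` over `|y| ≤ ρ` is `ρ^(2-2s)` times its value on the unit
ball (finite, as `2 - q > -n`), and `|x|/2 ≤ ⟨x⟩` turns `⟨x⟩^(-q-2) (|x|/2)^(2-2s)` into `⟨x⟩^(-n-4s)`.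
-/

open scoped RealInnerProductSpace

theorem div_rpow_le_mul_rpow_of_le_mul_sq {a M t q : ℝ} (ha : 0 ≤ a) (hM : 0 ≤ M) (ht : 0 ≤ t)
    (h : a ≤ M * t ^ 2) : a / t ^ q ≤ M * t ^ (2 - q) := by
  rcases ht.eq_or_lt with rfl | ht
  · have ha0 : a = 0 := by simp at h; linarith
    rw [ha0, zero_div]
    exact mul_nonneg hM (Real.rpow_nonneg le_rfl _)
  · rw [div_le_iff₀ (Real.rpow_pos_of_pos ht q), mul_assoc, ← Real.rpow_add ht, sub_add_cancel]
    exact_mod_cast h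

theorem abs_add_sub_two_mul_le_of_hasDerivAt {f f' f'' : ℝ → ℝ} {M : ℝ}
    (hf : ∀ t ∈ Icc (-1 : ℝ) 1, HasDerivAt f (f' t) t)
    (hf' : ∀ t ∈ Icc (-1 : ℝ) 1, HasDerivAt f' (f'' t) t)
    (hM : ∀ t ∈ Icc (-1 : ℝ) 1, |f'' t| ≤ M) :
    |f 1 + f (-1) - 2 * f 0| ≤ 2 * M := by
  have hM0 : 0 ≤ M := (abs_nonneg _).trans (hM 0 ⟨by norm_num, by norm_num⟩)
  have hsymm : ∀ t ∈ Icc (0 : ℝ) 1, ‖f' t - f' (-t)‖ ≤ 2 * M := by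
    rintro t ⟨ht0, ht1⟩
    have hmvt := norm_image_sub_le_of_norm_deriv_le_segment' (a := -t) (b := t)
      (fun u hu => (hf' u ⟨by linarith [hu.1], by linarith [hu.2]⟩).hasDerivWithinAt)
      (fun u hu => hM u ⟨by linarith [hu.1], by linarith [hu.2]⟩) t ⟨by linarith, le_rfl⟩
    nlinarith
  have hderiv : ∀ t ∈ Icc (0 : ℝ) 1, HasDerivWithinAt (fun t => f t + f (-t) - 2 * f 0)
      (f' t - f' (-t)) (Icc 0 1) t := by
    rintro t ⟨ht0, ht1⟩
    have hneg := (hf (-t) ⟨by linarith, by linarith⟩).comp t (hasDerivAt_neg t)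
    have := (((hf t ⟨by linarith, ht1⟩).add hneg).sub_const (2 * f 0)).hasDerivWithinAt
      (s := Icc 0 1)
    rw [mul_neg_one, ← sub_eq_add_neg] at this
    exact this
  have := norm_image_sub_le_of_norm_deriv_le_segment_01' hderiv
    (fun t ht => hsymm t ⟨ht.1, ht.2.le⟩)
  have hF0 : f 0 + f (-0) - 2 * f 0 = 0 := by rw [neg_zero]; ring
  rwa [hF0, sub_zero, Real.norm_eq_abs] at this

section NormAlongLine

variable {F : Type*} [NormedAddCommGroup F] [InnerProductSpace ℝ F] {x y : F} {t : ℝ}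

theorem hasDerivAt_norm_add_smul (h : x + t • y ≠ 0) :
    HasDerivAt (fun t : ℝ => ‖x + t • y‖) (⟪x + t • y, y⟫ / ‖x + t • y‖) t := by
  have hline : HasDerivAt (fun t : ℝ => x + t • y) y t := by
    simpa using ((hasDerivAt_id t).smul_const y).const_add x
  have hsq := (hline.norm_sq.sqrt (by simpa using h))
  simp only [Real.sqrt_sq (norm_nonneg _)] at hsq
  convert hsq using 1
  ring

theorem hasDerivAt_inner_div_norm_add_smul (h : x + t • y ≠ 0) :
    HasDerivAt (fun t : ℝ => ⟪x + t • y, y⟫ / ‖x + t • y‖)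
      ((‖y‖ ^ 2 - (⟪x + t • y, y⟫ / ‖x + t • y‖) ^ 2) / ‖x + t • y‖) t := by
  have hline : HasDerivAt (fun t : ℝ => x + t • y) y t := by
    simpa using ((hasDerivAt_id t).smul_const y).const_add x
  have hinner := hline.inner ℝ (hasDerivAt_const t y)
  have hnorm : ‖x + t • y‖ ≠ 0 := norm_ne_zero_iff.2 h
  refine (hinner.div (hasDerivAt_norm_add_smul h) hnorm).congr_deriv ?_
  rw [inner_zero_right, zero_add, real_inner_self_eq_norm_sq]
  field_simp

theorem abs_inner_div_norm_le (x y : F) : |⟪x, y⟫ / ‖x‖| ≤ ‖y‖ := by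
  rcases eq_or_ne x 0 with rfl | hx
  · simp
  rw [abs_div, abs_norm, div_le_iff₀ (norm_pos_iff.2 hx), mul_comm]
  exact abs_real_inner_le_norm x y

theorem abs_comp_norm_add_add_sub_two_mul_le {g g' g'' : ℝ → ℝ} {ρ A B : ℝ} (hρ : 0 < ρ)
    (hg : ∀ r, ρ ≤ r → HasDerivAt g (g' r) r) (hg' : ∀ r, ρ ≤ r → HasDerivAt g' (g'' r) r)
    (hA : ∀ r, ρ ≤ r → |g'' r| ≤ A) (hB : ∀ r, ρ ≤ r → |g' r| ≤ B * r)
    (hxy : ρ + ‖y‖ ≤ ‖x‖) :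
    |g ‖x + y‖ + g ‖x - y‖ - 2 * g ‖x‖| ≤ 2 * ((A + B) * ‖y‖ ^ 2) := by
  have hρle : ∀ t ∈ Icc (-1 : ℝ) 1, ρ ≤ ‖x + t • y‖ := by
    intro t ht
    have hty : ‖t • y‖ ≤ ‖y‖ := by
      rw [norm_smul, Real.norm_eq_abs]
      exact mul_le_of_le_one_left (norm_nonneg _) (abs_le.2 ht)
    have := norm_sub_norm_le x (-(t • y))
    rw [sub_neg_eq_add, norm_neg] at this
    linarith
  have hne : ∀ t ∈ Icc (-1 : ℝ) 1, x + t • y ≠ 0 := fun t ht =>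
    norm_pos_iff.1 (hρ.trans_le (hρle t ht))
  set r : ℝ → ℝ := fun t => ‖x + t • y‖
  set r' : ℝ → ℝ := fun t => ⟪x + t • y, y⟫ / ‖x + t • y‖
  have key := abs_add_sub_two_mul_le_of_hasDerivAt (f := fun t => g (r t))
    (f' := fun t => g' (r t) * r' t)
    (f'' := fun t => g'' (r t) * r' t * r' t + g' (r t) * ((‖y‖ ^ 2 - r' t ^ 2) / r t))
    (M := (A + B) * ‖y‖ ^ 2)
    (fun t ht => (hg _ (hρle t ht)).comp t (hasDerivAt_norm_add_smul (hne t ht)))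
    (fun t ht => (((hg' _ (hρle t ht)).comp t (hasDerivAt_norm_add_smul (hne t ht))).mul
      (hasDerivAt_inner_div_norm_add_smul (hne t ht))))
    (fun t ht => by
      have hr : 0 < r t := hρ.trans_le (hρle t ht)
      have hr' : |r' t| ≤ ‖y‖ := abs_inner_div_norm_le _ _
      have hr'' : |(‖y‖ ^ 2 - r' t ^ 2) / r t| ≤ ‖y‖ ^ 2 / r t := by
        rw [abs_div, abs_of_pos hr]
        gcongr
        rw [abs_le]
        constructor <;> nlinarith [abs_nonneg (r' t), sq_abs (r' t), norm_nonneg y]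
      have hA' : |g'' (r t)| ≤ A := hA _ (hρle t ht)
      have hB' : |g' (r t)| ≤ B * r t := hB _ (hρle t ht)
      calc |g'' (r t) * r' t * r' t + g' (r t) * ((‖y‖ ^ 2 - r' t ^ 2) / r t)|
          ≤ |g'' (r t)| * |r' t| * |r' t| + |g' (r t)| * |(‖y‖ ^ 2 - r' t ^ 2) / r t| := by
            rw [← abs_mul, ← abs_mul, ← abs_mul]
            exact abs_add_le _ _
        _ ≤ A * ‖y‖ * ‖y‖ + B * r t * (‖y‖ ^ 2 / r t) := by
            have hA0 : 0 ≤ A := (abs_nonneg _).trans hA'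
            have hB0 : 0 ≤ B * r t := (abs_nonneg _).trans hB'
            gcongr
        _ = (A + B) * ‖y‖ ^ 2 := by field_simp)
  simpa [r, sub_eq_add_neg] using key

end NormAlongLine

section

variable {E : Type*} [NormedAddCommGroup E] [NormedSpace ℝ E] [FiniteDimensional ℝ E]
  [MeasurableSpace E] [BorelSpace E] (μ : Measure E) [μ.IsAddHaarMeasure]

open Module Metric

theorem integrableOn_closedBall_norm_rpow (hd : 1 ≤ finrank ℝ E) {p : ℝ}
    (hp : -(finrank ℝ E : ℝ) < p) (ρ : ℝ) :
    IntegrableOn (fun y : E => ‖y‖ ^ p) (closedBall 0 ρ) μ :=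
  (locallyIntegrable_of_norm_le_rpow (C := 1) (α := -p) hd (by linarith)
    (Filter.Eventually.of_forall fun y => by
      simp [abs_of_nonneg (Real.rpow_nonneg (norm_nonneg y) p)])
    (measurable_norm.pow_const p).aestronglyMeasurable).integrableOn_isCompact
    (isCompact_closedBall 0 ρ)

theorem setIntegral_closedBall_norm_rpow {p ρ : ℝ} (hρ : 0 < ρ) :
    ∫ y in closedBall (0 : E) ρ, ‖y‖ ^ p ∂μ
      = ρ ^ ((finrank ℝ E : ℝ) + p) * ∫ y in closedBall (0 : E) 1, ‖y‖ ^ p ∂μ := by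
  have hscale := Measure.setIntegral_comp_smul_of_pos μ (fun y : E => ‖y‖ ^ p) (closedBall 0 1) hρ
  rw [_root_.smul_closedBall _ _ zero_le_one, smul_zero, Real.norm_of_nonneg hρ.le, mul_one,
    smul_eq_mul] at hscale
  simp only [norm_smul, Real.norm_of_nonneg hρ.le,
    Real.mul_rpow hρ.le (norm_nonneg _), integral_const_mul] at hscale
  rw [Real.rpow_add hρ, Real.rpow_natCast, mul_assoc, hscale]
  field_simp

theorem lintegral_closedBall_norm_rpow (hd : 1 ≤ finrank ℝ E) {p ρ : ℝ}
    (hp : -(finrank ℝ E : ℝ) < p) (hρ : 0 < ρ) :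
    ∫⁻ y in closedBall (0 : E) ρ, ENNReal.ofReal (‖y‖ ^ p) ∂μ
      = ENNReal.ofReal (ρ ^ ((finrank ℝ E : ℝ) + p) * ∫ y in closedBall (0 : E) 1, ‖y‖ ^ p ∂μ) := by
  rw [← setIntegral_closedBall_norm_rpow μ hρ, ofReal_integral_eq_lintegral_ofReal
    (integrableOn_closedBall_norm_rpow μ hd hp ρ)
    (Filter.Eventually.of_forall fun y => Real.rpow_nonneg (norm_nonneg y) p)]

theorem lintegral_closedBall_div_rpow_le (hd : 1 ≤ finrank ℝ E) {f : E → ℝ} {M q ρ : ℝ}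
    (hM : 0 ≤ M) (hq : q < finrank ℝ E + 2) (hρ : 0 < ρ)
    (hf : ∀ y ∈ closedBall (0 : E) ρ, |f y| ≤ M * ‖y‖ ^ 2) :
    ∫⁻ y in closedBall (0 : E) ρ, ENNReal.ofReal (|f y| / ‖y‖ ^ q) ∂μ
      ≤ ENNReal.ofReal (M * ρ ^ ((finrank ℝ E : ℝ) + 2 - q)
          * ∫ y in closedBall (0 : E) 1, ‖y‖ ^ (2 - q) ∂μ) := by
  calc _ ≤ ∫⁻ y in closedBall (0 : E) ρ, ENNReal.ofReal M * ENNReal.ofReal (‖y‖ ^ (2 - q)) ∂μ :=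
        setLIntegral_mono' measurableSet_closedBall fun y hy => by
          rw [← ENNReal.ofReal_mul hM]
          exact ENNReal.ofReal_le_ofReal
            (div_rpow_le_mul_rpow_of_le_mul_sq (abs_nonneg _) hM (norm_nonneg y) (hf y hy))
    _ = _ := by
        rw [lintegral_const_mul' _ _ ENNReal.ofReal_ne_top,
          lintegral_closedBall_norm_rpow μ hd (by linarith) hρ, ← ENNReal.ofReal_mul hM,
          add_sub_assoc, mul_assoc]

end

namespace Phi

def weight (r : ℝ) : ℝ := 1 + (r - 1) ^ 4

noncomputable def profile (q r : ℝ) : ℝ := weight r ^ (-(q / 4))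

noncomputable def profileDeriv (q r : ℝ) : ℝ := -q * (r - 1) ^ 3 * weight r ^ (-(q / 4) - 1)

noncomputable def profileDeriv2 (q r : ℝ) : ℝ :=
  q * (q + 4) * (r - 1) ^ 6 * weight r ^ (-(q / 4) - 2)
    - 3 * q * (r - 1) ^ 2 * weight r ^ (-(q / 4) - 1)

variable {q r : ℝ}

theorem weight_pos (r : ℝ) : 0 < weight r := by unfold weight; positivity

theorem hasDerivAt_weight (r : ℝ) : HasDerivAt weight (4 * (r - 1) ^ 3) r := by
  refine ((((hasDerivAt_id r).sub_const 1).pow 4).const_add 1).congr_deriv ?_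
  norm_num

theorem hasDerivAt_profile (q r : ℝ) : HasDerivAt (profile q) (profileDeriv q r) r := by
  refine ((hasDerivAt_weight r).rpow_const (Or.inl (weight_pos r).ne')).congr_deriv ?_
  unfold profileDeriv; ring

theorem hasDerivAt_profileDeriv (q r : ℝ) :
    HasDerivAt (profileDeriv q) (profileDeriv2 q r) r := by
  have hcubic : HasDerivAt (fun r : ℝ => -q * (r - 1) ^ 3) (-q * (3 * (r - 1) ^ 2)) r := by
    simpa using (((hasDerivAt_id r).sub_const 1).pow 3).const_mul (-q)
  refine (hcubic.mul ((hasDerivAt_weight r).rpow_const (p := -(q / 4) - 1)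
    (Or.inl (weight_pos r).ne'))).congr_deriv ?_
  rw [show -(q / 4) - 1 - 1 = -(q / 4) - 2 by ring]
  unfold profileDeriv2; ring

theorem pow_mul_weight_rpow_le (hr : 1 ≤ r) (k : ℕ) (e : ℝ) :
    (r - 1) ^ k * weight r ^ e ≤ weight r ^ (e + k / 4) := by
  have hr1 : 0 ≤ r - 1 := by linarith
  have hpow : (r - 1) ^ k ≤ weight r ^ ((k : ℝ) / 4) := by
    calc (r - 1) ^ k = ((r - 1) ^ 4) ^ ((k : ℝ) / 4) := by
          rw [← Real.rpow_natCast _ 4, ← Real.rpow_mul hr1, Nat.cast_ofNat,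
            mul_div_cancel₀ _ (by norm_num : (4 : ℝ) ≠ 0), Real.rpow_natCast]
      _ ≤ weight r ^ ((k : ℝ) / 4) := by
          gcongr; unfold weight; linarith
  rw [Real.rpow_add (weight_pos r), mul_comm (weight r ^ e)]
  exact mul_le_mul_of_nonneg_right hpow (Real.rpow_nonneg (weight_pos r).le _)

theorem abs_profileDeriv_le (hq : 0 ≤ q) (hr : 1 ≤ r) :
    |profileDeriv q r| ≤ q * weight r ^ (-((q + 2) / 4)) * r := by
  have hsq := pow_mul_weight_rpow_le hr 2 (-(q / 4) - 1)
  rw [show -(q / 4) - 1 + ((2 : ℕ) : ℝ) / 4 = -((q + 2) / 4) by push_cast; ring] at hsq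
  have hW : 0 ≤ weight r ^ (-(q / 4) - 1) := Real.rpow_nonneg (weight_pos r).le _
  calc |profileDeriv q r| = q * ((r - 1) * ((r - 1) ^ 2 * weight r ^ (-(q / 4) - 1))) := by
        rw [profileDeriv, abs_mul, abs_mul, abs_neg, abs_of_nonneg hq, abs_of_nonneg hW,
          abs_of_nonneg (pow_nonneg (by linarith) _)]
        ring
    _ ≤ q * (r * weight r ^ (-((q + 2) / 4))) := by
        gcongr
        linarith
    _ = q * weight r ^ (-((q + 2) / 4)) * r := by ring

theorem abs_profileDeriv2_le (hq : 0 ≤ q) (hr : 1 ≤ r) :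
    |profileDeriv2 q r| ≤ q * (q + 7) * weight r ^ (-((q + 2) / 4)) := by
  have h6 := pow_mul_weight_rpow_le hr 6 (-(q / 4) - 2)
  have h2 := pow_mul_weight_rpow_le hr 2 (-(q / 4) - 1)
  rw [show -(q / 4) - 2 + ((6 : ℕ) : ℝ) / 4 = -((q + 2) / 4) by push_cast; ring] at h6
  rw [show -(q / 4) - 1 + ((2 : ℕ) : ℝ) / 4 = -((q + 2) / 4) by push_cast; ring] at h2
  have hW : 0 ≤ weight r ^ (-((q + 2) / 4)) := Real.rpow_nonneg (weight_pos r).le _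
  have h6' : 0 ≤ (r - 1) ^ 6 * weight r ^ (-(q / 4) - 2) :=
    mul_nonneg (by positivity) (Real.rpow_nonneg (weight_pos r).le _)
  have h2' : 0 ≤ (r - 1) ^ 2 * weight r ^ (-(q / 4) - 1) :=
    mul_nonneg (by positivity) (Real.rpow_nonneg (weight_pos r).le _)
  have hq4 : 0 ≤ q * (q + 4) := by positivity
  unfold profileDeriv2
  rw [abs_le]
  constructor <;> nlinarith [mul_le_mul_of_nonneg_left h6 hq4,
    mul_le_mul_of_nonneg_left h2 (by positivity : 0 ≤ 3 * q), mul_nonneg hq4 h6',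
    mul_nonneg hq h2', mul_nonneg hq hW, mul_nonneg hq4 hW]

theorem weight_le_mul_weight {R : ℝ} (hR : 2 ≤ R) (hr : R / 2 ≤ r) : weight R ≤ 256 * weight r := by
  have h1 : 0 ≤ (r - 1) ^ 4 := by positivity
  unfold weight
  rcases le_or_gt R 3 with h | h
  · have : (R - 1) ^ 2 ≤ 4 := by nlinarith
    nlinarith [sq_nonneg (R - 1)]
  · have h4 : ((R - 1) / 4) ^ 4 ≤ (r - 1) ^ 4 := pow_le_pow_left₀ (by linarith) (by linarith) 4
    nlinarith

theorem weight_rpow_neg_le {R e : ℝ} (hR : 2 ≤ R) (hr : R / 2 ≤ r) (he : 0 ≤ e) :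
    weight r ^ (-e) ≤ 256 ^ e * weight R ^ (-e) := by
  calc weight r ^ (-e) ≤ (weight R / 256) ^ (-e) := by
        apply Real.rpow_le_rpow_of_nonpos (by linarith [weight_pos R]) _ (by linarith)
        linarith [weight_le_mul_weight hR hr]
    _ = 256 ^ e * weight R ^ (-e) := by
        rw [Real.div_rpow (weight_pos R).le (by norm_num),
          Real.rpow_neg (by norm_num : (0 : ℝ) ≤ 256), div_inv_eq_mul, mul_comm]

theorem jbr_rpow {n : ℕ} (x : EuclideanSpace ℝ (Fin n)) (e : ℝ) :
    jbr x ^ e = weight ‖x‖ ^ (e / 4) := by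
  rw [show jbr x = weight ‖x‖ ^ ((1 : ℝ) / 4) from rfl, ← Real.rpow_mul (weight_pos _).le,
    one_div_mul_eq_div]

theorem jbr_pos {n : ℕ} (x : EuclideanSpace ℝ (Fin n)) : 0 < jbr x :=
  Real.rpow_pos_of_pos (weight_pos _) _

theorem half_norm_le_jbr {n : ℕ} {x : EuclideanSpace ℝ (Fin n)} (hx : 2 ≤ ‖x‖) :
    ‖x‖ / 2 ≤ jbr x := by
  have h4 : (‖x‖ / 2) ^ 4 ≤ 1 + (‖x‖ - 1) ^ 4 := by
    nlinarith [pow_le_pow_left₀ (by linarith : 0 ≤ ‖x‖ / 2) (by linarith : ‖x‖ / 2 ≤ ‖x‖ - 1) 4]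
  calc ‖x‖ / 2 = ((‖x‖ / 2) ^ 4) ^ ((1 : ℝ) / 4) := by
        rw [← Real.rpow_natCast, ← Real.rpow_mul (by linarith)]; norm_num
    _ ≤ jbr x := by unfold jbr; gcongr

theorem jbr_rpow_neg_mul_half_norm_rpow_le {n : ℕ} {x : EuclideanSpace ℝ (Fin n)}
    (hx : 2 ≤ ‖x‖) {a : ℝ} (ha : 0 ≤ a) (b : ℝ) :
    jbr x ^ (-b) * (‖x‖ / 2) ^ a ≤ jbr x ^ (a - b) := by
  rw [sub_eq_add_neg, Real.rpow_add (jbr_pos x), mul_comm (jbr x ^ a)]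
  exact mul_le_mul_of_nonneg_left (Real.rpow_le_rpow (by linarith) (half_norm_le_jbr hx) ha)
    (Real.rpow_nonneg (jbr_pos x).le _)

theorem phi_eq_profile {n : ℕ} (s : ℝ) {z : EuclideanSpace ℝ (Fin n)} (hz : 1 ≤ ‖z‖) :
    phi n s z = profile ((n : ℝ) + 2 * s) ‖z‖ := by
  rcases hz.eq_or_lt with h | h
  · simp [phi, profile, weight, ← h]
  · rw [phi, if_neg h.not_ge, jbr_rpow, profile]
    ring_nf

theorem abs_phi_add_add_sub_two_mul_le {n : ℕ} {s : ℝ} (hq : 0 ≤ (n : ℝ) + 2 * s)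
    {x y : EuclideanSpace ℝ (Fin n)} (hx : 2 ≤ ‖x‖) (hy : ‖y‖ ≤ ‖x‖ / 2) :
    |phi n s (x + y) + phi n s (x - y) - 2 * phi n s x|
      ≤ 2 * (((n : ℝ) + 2 * s) * ((n : ℝ) + 2 * s + 8) * 256 ^ (((n : ℝ) + 2 * s + 2) / 4))
        * jbr x ^ (-((n : ℝ) + 2 * s + 2)) * ‖y‖ ^ 2 := by
  set q : ℝ := (n : ℝ) + 2 * s
  set W : ℝ := 256 ^ ((q + 2) / 4) * weight ‖x‖ ^ (-((q + 2) / 4))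
  have hfar : ∀ z : EuclideanSpace ℝ (Fin n), ‖x‖ ≤ ‖z‖ + ‖y‖ → 1 ≤ ‖z‖ := fun z hz => by
    linarith
  rw [phi_eq_profile s (hfar _ (by simpa using norm_sub_le (x + y) y)),
    phi_eq_profile s (hfar _ (by simpa using norm_add_le (x - y) y)),
    phi_eq_profile s (by linarith)]
  have hbound := abs_comp_norm_add_add_sub_two_mul_le (g' := profileDeriv q)
    (g'' := profileDeriv2 q) (ρ := ‖x‖ / 2) (A := q * (q + 7) * W) (B := q * W)
    (by linarith) (fun r _ => hasDerivAt_profile q r) (fun r _ => hasDerivAt_profileDeriv q r)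
    (fun r hr => (abs_profileDeriv2_le hq (by linarith)).trans (by
      gcongr; exact weight_rpow_neg_le hx hr (by positivity)))
    (fun r hr => (abs_profileDeriv_le hq (by linarith)).trans (by
      gcongr
      · linarith
      · exact weight_rpow_neg_le hx hr (by positivity)))
    (show ‖x‖ / 2 + ‖y‖ ≤ ‖x‖ by linarith)
  refine hbound.trans (le_of_eq ?_)
  rw [jbr_rpow, neg_div]
  ring

end Phi

open Phi in
/-- For `n ≥ 1` and `s ∈ (0,1)`, there is a constant `C > 0` (depending only on
`n` and `s`) such that for every `x` with `|x| ≥ 2`,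
`∫_{|y| ≤ |x|/2} |φ(x+y) + φ(x-y) - 2φ(x)| / |y|^{n+2s} dy ≤ C ⟨x⟩^{-n-4s}`. -/
theorem stmt_11 (n : ℕ) (hn : 1 ≤ n) (s : ℝ) (hs : s ∈ Set.Ioo (0 : ℝ) 1) :
    ∃ C : ℝ, 0 < C ∧ ∀ x : EuclideanSpace ℝ (Fin n), 2 ≤ ‖x‖ →
      ∫⁻ y in {y : EuclideanSpace ℝ (Fin n) | ‖y‖ ≤ ‖x‖ / 2},
          ENNReal.ofReal
            (|phi n s (x + y) + phi n s (x - y) - 2 * phi n s x| /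
              ‖y‖ ^ ((n : ℝ) + 2 * s))
        ≤ ENNReal.ofReal (C * jbr x ^ (-((n : ℝ) + 4 * s))) := by
  obtain ⟨hs0, hs1⟩ := hs
  set q : ℝ := (n : ℝ) + 2 * s
  set K : ℝ := 2 * (q * (q + 8) * 256 ^ ((q + 2) / 4))
  set c : ℝ := ∫ y in Metric.closedBall (0 : EuclideanSpace ℝ (Fin n)) 1, ‖y‖ ^ (2 - q)
  have hK : 0 < K := by positivity
  have hc : 0 ≤ c := setIntegral_nonneg Metric.isClosed_closedBall.measurableSet
    fun y _ => Real.rpow_nonneg (norm_nonneg y) _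
  refine ⟨K * max c 1, by positivity, fun x hx => ?_⟩
  have hball : {y : EuclideanSpace ℝ (Fin n) | ‖y‖ ≤ ‖x‖ / 2} = Metric.closedBall 0 (‖x‖ / 2) := by
    ext; simp
  have hjbr : ∀ e : ℝ, 0 ≤ jbr x ^ e := fun e => Real.rpow_nonneg (jbr_pos x).le e
  rw [hball]
  refine (lintegral_closedBall_div_rpow_le volume (by simpa) (mul_nonneg hK.le (hjbr _))
    (by simp; linarith) (by linarith) fun y hy => abs_phi_add_add_sub_two_mul_le (by positivity) hx
      (by simpa using hy)).trans (ENNReal.ofReal_le_ofReal ?_)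
  rw [finrank_euclideanSpace_fin, show (n : ℝ) + 2 - q = 2 - 2 * s by ring]
  calc K * jbr x ^ (-(q + 2)) * (‖x‖ / 2) ^ (2 - 2 * s) * c
      = K * (jbr x ^ (-(q + 2)) * (‖x‖ / 2) ^ (2 - 2 * s)) * c := by ring
    _ ≤ K * jbr x ^ (-((n : ℝ) + 4 * s)) * max c 1 :=
        mul_le_mul (mul_le_mul_of_nonneg_left ((jbr_rpow_neg_mul_half_norm_rpow_le hx
          (by linarith) _).trans_eq (by simp only [q]; ring_nf)) hK.le) (le_max_left c 1) hc
          (mul_nonneg hK.le (hjbr _))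
    _ = _ := by ring
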